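/- For all μ, r > 0, p¹(μ, r) := (μ·e^{-2r}·(μ + 2r + 2rμ) - μ²·e^{-2r(2+μ)}) / (1+μ)² ≥ e^{-2r}·(1 - e^{-2μr}). -/

import Mathlib

noncomputable def p1 (μ r : ℝ) : ℝ :=
  (μ * Real.exp (-(2 * r)) * (μ + 2 * r + 2 * r * μ)
    - μ ^ 2 * Real.exp (-(2 * r * (2 + μ)))) / (1 + μ) ^ 2

open Real

/-! After dividing by `e^{-2r}` and clearing `(1 + μ)²`, the claim reads `g(0) ≤ g(2r)` for
`g s = (1+μ)² e^{-μs} - μ² e^{-(1+μ)s} + μ(1+μ)s`. Its derivative is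
`μ(1+μ) e^{-μs} (e^{μs} + μ e^{-s} - (1+μ))`, which is nonnegative because
`e^{μs} ≥ 1 + μs` and `e^{-s} ≥ 1 - s`. -/

lemma one_add_le_exp_mul_add_mul_exp_neg {m : ℝ} (hm : 0 ≤ m) (s : ℝ) :
    1 + m ≤ exp (m * s) + m * exp (-s) := by
  have h₁ := add_one_le_exp (m * s)
  have h₂ := mul_le_mul_of_nonneg_left (add_one_le_exp (-s)) hm
  linarith

lemma hasDerivAt_exp_neg_mul (a s : ℝ) :
    HasDerivAt (fun s => exp (-(a * s))) (-a * exp (-(a * s))) s := by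
  simpa [mul_comm] using (((hasDerivAt_id s).const_mul a).neg).exp

lemma monotone_exp_neg_combination {m : ℝ} (hm : 0 ≤ m) :
    Monotone fun s => (1 + m) ^ 2 * exp (-(m * s)) - m ^ 2 * exp (-((1 + m) * s))
      + m * (1 + m) * s := by
  refine monotone_of_hasDerivAt_nonneg (fun s => (((hasDerivAt_exp_neg_mul m s).const_mul _).sub
    ((hasDerivAt_exp_neg_mul (1 + m) s).const_mul _)).add ((hasDerivAt_id s).const_mul _))
    fun s => ?_
  have hsplit : exp (-((1 + m) * s)) = exp (-(m * s)) * exp (-s) := by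
    rw [← exp_add]; ring_nf
  have hcancel : exp (-(m * s)) * exp (m * s) = 1 := by
    rw [← exp_add]; simp
  have hkey := one_add_le_exp_mul_add_mul_exp_neg hm s
  calc (0 : ℝ)
      ≤ m * (1 + m) * exp (-(m * s)) * (exp (m * s) + m * exp (-s) - (1 + m)) := by
        have := exp_pos (-(m * s))
        have : 0 ≤ exp (m * s) + m * exp (-s) - (1 + m) := by linarith
        positivity
    _ = _ := by simp only [hsplit]; linear_combination (m * (1 + m)) * hcancel

lemma sq_one_add_mul_one_sub_exp_le {m s : ℝ} (hm : 0 ≤ m) (hs : 0 ≤ s) :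
    (1 + m) ^ 2 * (1 - exp (-(m * s))) ≤ m ^ 2 * (1 - exp (-((1 + m) * s))) + m * (1 + m) * s := by
  have := monotone_exp_neg_combination hm hs
  simp only [mul_zero, neg_zero, exp_zero, mul_one, add_zero] at this
  linarith

theorem p1_lower_bound (μ r : ℝ) (hμ : 0 < μ) (hr : 0 < r) :
    Real.exp (-(2 * r)) * (1 - Real.exp (-(2 * μ * r))) ≤ p1 μ r := by
  have key := mul_le_mul_of_nonneg_left
    (sq_one_add_mul_one_sub_exp_le (s := 2 * r) hμ.le (by positivity)) (exp_pos (-(2 * r))).le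
  have hsplit : exp (-(2 * r * (2 + μ))) = exp (-(2 * r)) * exp (-((1 + μ) * (2 * r))) := by
    rw [← exp_add]; ring_nf
  rw [p1, le_div_iff₀ (by positivity), hsplit, show 2 * μ * r = μ * (2 * r) by ring]
  linear_combination key
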